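/- The matrix A_q = γ_q DT_q^{-1} DT_q^{-T} is symmetric and positive definite at every point of Ω₀, and its minimal eigenvalue is bounded below by λ̄ = 2(1 + (1+(d₁+d₂)²)/ε + √((1 + (1+(d₁+d₂)²)/ε)² - 4))^{-1} > 0, where d₁, d₂ are bounds with ‖q''‖_{L^∞(I)} ≤ d₁ and |q'(0)| ≤ d₂ (so that ‖q'‖_∞ ≤ d₁ + d₂) and q ≤ 1 - ε. -/

import Mathlib

open Set Matrix

/-!
`A_q = !![c, -b; -b, (1 + b²)/c]` with `c = 1 - q x`, `b = (1 - y) q' x` has determinant one, so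
its eigenvalues are the roots of `t² - (tr A_q) t + 1`, and the smaller root decreases as the trace
grows. It therefore suffices to bound the trace by `M = 1 + (1 + (d₁ + d₂)²)/ε`. This follows from
`c ≥ ε` and `q² + q'² ≤ (d₁ + d₂)²`, where `|q'(x)| ≤ d₂ + d₁ x` by integrating `q''` from `0`, and
`|q(x)| ≤ d₁ min(x, 1 - x)` because `q'` vanishes somewhere in `I` (Rolle), whence `|q'| ≤ d₁`.
-/

/-- The smaller root of `t² - M t + 1` when `2 ≤ M`. -/
noncomputable def smallRoot (M : ℝ) : ℝ := 2 * (M + Real.sqrt (M ^ 2 - 4))⁻¹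

lemma smallRoot_pos {M : ℝ} (hM : 0 < M) : 0 < smallRoot M := by
  unfold smallRoot
  have := Real.sqrt_nonneg (M ^ 2 - 4)
  have : 0 < M + Real.sqrt (M ^ 2 - 4) := by linarith
  positivity

lemma smallRoot_le_one {M : ℝ} (hM : 2 ≤ M) : smallRoot M ≤ 1 := by
  unfold smallRoot
  have := Real.sqrt_nonneg (M ^ 2 - 4)
  rw [← div_eq_mul_inv, div_le_one (by linarith)]
  linarith

lemma smallRoot_sq_sub_mul_add_one {M : ℝ} (hM : 2 ≤ M) :
    smallRoot M ^ 2 - M * smallRoot M + 1 = 0 := by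
  have hR := Real.sqrt_nonneg (M ^ 2 - 4)
  have hR2 := Real.sq_sqrt (by nlinarith : (0 : ℝ) ≤ M ^ 2 - 4)
  have hsum : M + Real.sqrt (M ^ 2 - 4) ≠ 0 := by linarith
  have hsmall : smallRoot M = (M - Real.sqrt (M ^ 2 - 4)) / 2 := by
    unfold smallRoot
    field_simp
    linear_combination hR2
  rw [hsmall]
  linear_combination hR2 / 4

lemma dotProduct_mulVec_fin_two {R : Type*} [CommRing R] (a b d : R) (v : Fin 2 → R) :
    v ⬝ᵥ !![a, b; b, d] *ᵥ v = a * v 0 ^ 2 + 2 * b * v 0 * v 1 + d * v 1 ^ 2 := by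
  simp only [dotProduct, mulVec, Fin.sum_univ_two, of_apply, cons_val', cons_val_zero,
    cons_val_one, empty_val', cons_val_fin_one]
  ring

lemma mul_sq_add_sq_le_of_sq_le_mul_sub {a b d l x y : ℝ} (ha : l ≤ a) (hd : l ≤ d)
    (hb : b ^ 2 ≤ (a - l) * (d - l)) :
    l * (x ^ 2 + y ^ 2) ≤ a * x ^ 2 + 2 * b * x * y + d * y ^ 2 := by
  suffices 0 ≤ (a - l) * x ^ 2 + 2 * b * x * y + (d - l) * y ^ 2 by linarith
  rcases (add_nonneg (sub_nonneg.2 ha) (sub_nonneg.2 hd)).eq_or_lt with htr | htr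
  · have hb0 : b = 0 := pow_eq_zero_iff two_ne_zero |>.1 (by nlinarith [sq_nonneg b])
    have ha0 : a - l = 0 := by linarith
    have hd0 : d - l = 0 := by linarith
    simp [ha0, hd0, hb0]
  -- with `a' = a - l`, `d' = d - l`:
  -- `(a' + d') (a' x² + 2 b x y + d' y²) = (a' x + b y)² + (b x + d' y)² + (a' d' - b²)(x² + y²)`
  refine le_of_mul_le_mul_left ?_ htr
  nlinarith [sq_nonneg ((a - l) * x + b * y), sq_nonneg (b * x + (d - l) * y),
    mul_nonneg (sub_nonneg.2 hb) (add_nonneg (sq_nonneg x) (sq_nonneg y))]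

lemma smallRoot_mul_dotProduct_self_le {a b d M : ℝ} (ha : 0 < a) (hdet : a * d - b ^ 2 = 1)
    (htr : a + d ≤ M) (v : Fin 2 → ℝ) :
    smallRoot M * (v ⬝ᵥ v) ≤ v ⬝ᵥ !![a, b; b, d] *ᵥ v := by
  have hd : 0 < d := by nlinarith [sq_nonneg b]
  have htr2 : 2 ≤ a + d := by nlinarith [sq_nonneg (a - d)]
  have hM : 2 ≤ M := htr2.trans htr
  set l := smallRoot M
  have hl0 : 0 < l := smallRoot_pos (by linarith)
  have hl1 : l ≤ 1 := smallRoot_le_one hM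
  have hroot : l ^ 2 - M * l + 1 = 0 := smallRoot_sq_sub_mul_add_one hM
  -- `(a - l) (d - l) - b² = 1 - l (a + d) + l² ≥ 1 - l M + l² = 0`
  have hprod : b ^ 2 ≤ (a - l) * (d - l) := by nlinarith
  -- both factors are nonnegative, since their sum `a + d - 2 l ≥ 2 - 2 l` is
  have hal : l ≤ a := by nlinarith [sq_nonneg b]
  have hdl : l ≤ d := by nlinarith [sq_nonneg b]
  rw [dotProduct_mulVec_fin_two, show v ⬝ᵥ v = v 0 ^ 2 + v 1 ^ 2 by
    simp only [dotProduct, Fin.sum_univ_two]; ring]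
  exact mul_sq_add_sq_le_of_sq_le_mul_sub hal hdl hprod

lemma det_smul_inv_mul_transpose_inv_of_lower {b c : ℝ} (hc : c ≠ 0) :
    (!![1, 0; b, c] : Matrix (Fin 2) (Fin 2) ℝ).det •
        ((!![1, 0; b, c])⁻¹ * ((!![1, 0; b, c])⁻¹)ᵀ) = !![c, -b; -b, (1 + b ^ 2) / c] := by
  rw [inv_def, det_fin_two_of, adjugate_fin_two_of]
  ext i j
  fin_cases i <;> fin_cases j <;> simp [vecMul, dotProduct] <;> field_simp
  ring

lemma abs_sub_le_mul_of_abs_deriv_le {f : ℝ → ℝ} {a b C x y : ℝ} (hf : Differentiable ℝ f)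
    (hC : ∀ t ∈ Ioo a b, |deriv f t| ≤ C) (hx : x ∈ Icc a b) (hy : y ∈ Icc a b) :
    |f y - f x| ≤ C * |y - x| := by
  wlog hxy : x ≤ y generalizing x y
  · rw [abs_sub_comm, abs_sub_comm y]
    exact this hy hx (le_of_not_ge hxy)
  have hint : ∀ t ∈ interior (Icc a b), |deriv f t| ≤ C := by rwa [interior_Icc]
  rw [abs_of_nonneg (sub_nonneg.2 hxy), abs_le]
  constructor
  · have := (convex_Icc a b).mul_sub_le_image_sub_of_le_deriv hf.continuous.continuousOn
      hf.differentiableOn (fun t ht => (abs_le.1 (hint t ht)).1) x hx y hy hxy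
    linarith
  · exact (convex_Icc a b).image_sub_le_mul_sub_of_deriv_le hf.continuous.continuousOn
      hf.differentiableOn (fun t ht => (abs_le.1 (hint t ht)).2) x hx y hy hxy

section BoundaryValueBounds

variable {q : ℝ → ℝ} {d₁ d₂ : ℝ}

lemma abs_deriv_le_add_mul (hq' : Differentiable ℝ (deriv q))
    (hq'' : ∀ x ∈ Ioo (0 : ℝ) 1, |deriv (deriv q) x| ≤ d₁) (hq'0 : |deriv q 0| ≤ d₂)
    {x : ℝ} (hx : x ∈ Icc (0 : ℝ) 1) : |deriv q x| ≤ d₂ + d₁ * x := by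
  have hlip := abs_sub_le_mul_of_abs_deriv_le hq' hq'' (left_mem_Icc.2 zero_le_one) hx
  rw [sub_zero, abs_of_nonneg hx.1] at hlip
  linarith [abs_sub_abs_le_abs_sub (deriv q x) (deriv q 0)]

lemma abs_deriv_le_of_eq_zero_of_eq_zero (hq : Differentiable ℝ q)
    (hq' : Differentiable ℝ (deriv q)) (hq0 : q 0 = 0) (hq1 : q 1 = 0) (hd₁ : 0 ≤ d₁)
    (hq'' : ∀ x ∈ Ioo (0 : ℝ) 1, |deriv (deriv q) x| ≤ d₁)
    {x : ℝ} (hx : x ∈ Icc (0 : ℝ) 1) : |deriv q x| ≤ d₁ := by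
  obtain ⟨ξ, hξ, hξ0⟩ :=
    exists_deriv_eq_zero zero_lt_one hq.continuous.continuousOn (hq0.trans hq1.symm)
  have hlip := abs_sub_le_mul_of_abs_deriv_le hq' hq'' (Ioo_subset_Icc_self hξ) hx
  rw [hξ0, sub_zero] at hlip
  have hxξ : |x - ξ| ≤ 1 := abs_le.2 ⟨by linarith [hx.1, hξ.2], by linarith [hx.2, hξ.1]⟩
  nlinarith

lemma sq_le_mul_mul_one_sub (hq : Differentiable ℝ q) (hq' : Differentiable ℝ (deriv q))
    (hq0 : q 0 = 0) (hq1 : q 1 = 0) (hd₁ : 0 ≤ d₁)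
    (hq'' : ∀ x ∈ Ioo (0 : ℝ) 1, |deriv (deriv q) x| ≤ d₁)
    {x : ℝ} (hx : x ∈ Icc (0 : ℝ) 1) : q x ^ 2 ≤ d₁ * x * (d₁ * (1 - x)) := by
  have hq'bd : ∀ t ∈ Ioo (0 : ℝ) 1, |deriv q t| ≤ d₁ := fun t ht =>
    abs_deriv_le_of_eq_zero_of_eq_zero hq hq' hq0 hq1 hd₁ hq'' (Ioo_subset_Icc_self ht)
  have hleft := abs_sub_le_mul_of_abs_deriv_le hq hq'bd (left_mem_Icc.2 zero_le_one) hx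
  have hright := abs_sub_le_mul_of_abs_deriv_le hq hq'bd hx (right_mem_Icc.2 zero_le_one)
  rw [hq0, sub_zero, sub_zero, abs_of_nonneg hx.1] at hleft
  rw [hq1, zero_sub, abs_neg, abs_of_nonneg (sub_nonneg.2 hx.2)] at hright
  calc q x ^ 2 = |q x| * |q x| := by rw [← sq_abs, sq]
    _ ≤ d₁ * x * (d₁ * (1 - x)) :=
      mul_le_mul hleft hright (abs_nonneg _) ((abs_nonneg _).trans hleft)

lemma sq_add_sq_deriv_le (hq : Differentiable ℝ q) (hq' : Differentiable ℝ (deriv q))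
    (hq0 : q 0 = 0) (hq1 : q 1 = 0) (hd₁ : 0 ≤ d₁) (hd₂ : 0 ≤ d₂)
    (hq'' : ∀ x ∈ Ioo (0 : ℝ) 1, |deriv (deriv q) x| ≤ d₁) (hq'0 : |deriv q 0| ≤ d₂)
    {x : ℝ} (hx : x ∈ Icc (0 : ℝ) 1) : q x ^ 2 + deriv q x ^ 2 ≤ (d₁ + d₂) ^ 2 := by
  have hq2 := sq_le_mul_mul_one_sub hq hq' hq0 hq1 hd₁ hq'' hx
  obtain ⟨hlo, hhi⟩ := abs_le.1 (abs_deriv_le_add_mul hq' hq'' hq'0 hx)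
  have hq'2 : deriv q x ^ 2 ≤ (d₂ + d₁ * x) ^ 2 := sq_le_sq' hlo hhi
  nlinarith [mul_nonneg (mul_nonneg hd₁ (add_nonneg hd₁ (mul_nonneg zero_le_two hd₂)))
    (sub_nonneg.2 hx.2)]

end BoundaryValueBounds

lemma add_one_add_sq_div_le {ε s b D : ℝ} (hε : 0 < ε) (hε1 : ε ≤ 1) (hs : s ≤ 1 - ε)
    (hsb : s ^ 2 + b ^ 2 ≤ D ^ 2) :
    (1 - s) + (1 + b ^ 2) / (1 - s) ≤ 1 + (1 + D ^ 2) / ε := by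
  have hc : ε ≤ 1 - s := by linarith
  have hc0 : 0 < 1 - s := hε.trans_le hc
  have hdiag : (1 - s) + (1 + b ^ 2) / (1 - s) ≤ 2 + D ^ 2 / (1 - s) := by
    rw [← sub_nonneg]
    have hdiff : 2 + D ^ 2 / (1 - s) - ((1 - s) + (1 + b ^ 2) / (1 - s))
        = (D ^ 2 - s ^ 2 - b ^ 2) / (1 - s) := by
      field_simp
      ring
    rw [hdiff]
    exact div_nonneg (by linarith) hc0.le
  calc (1 - s) + (1 + b ^ 2) / (1 - s) ≤ 2 + D ^ 2 / (1 - s) := hdiag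
    _ ≤ 1 + (1 / ε + D ^ 2 / ε) := by
      linarith [one_le_one_div hε hε1, div_le_div_of_nonneg_left (sq_nonneg D) hε hc]
    _ = 1 + (1 + D ^ 2) / ε := by rw [add_div]

/-- The matrix `A_q = γ_q DT_q⁻¹ DT_q⁻ᵀ` is symmetric and positive
definite at every point of `Ω₀`, with minimal eigenvalue bounded below by
`λ̄ = 2(1 + (1+(d₁+d₂)²)/ε + √((1 + (1+(d₁+d₂)²)/ε)² - 4))⁻¹ > 0`, where
`‖q''‖_∞ ≤ d₁`, `|q'(0)| ≤ d₂` (so `‖q'‖_∞ ≤ d₁ + d₂`) and `q ≤ 1 - ε`. -/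
theorem Aq_symm_posdef_eigen_bound (ε : ℝ) (hε : ε ∈ Ioo (0 : ℝ) 1)
    (d₁ d₂ : ℝ) (hd₁ : 0 ≤ d₁) (hd₂ : 0 ≤ d₂)
    (q : ℝ → ℝ) (hq2 : ContDiff ℝ 2 q)
    (hq0 : q 0 = 0) (hq1 : q 1 = 0)
    (hq : ∀ x ∈ Ioo (0 : ℝ) 1, q x ≤ 1 - ε)
    (hq'' : ∀ x ∈ Ioo (0 : ℝ) 1, |deriv (deriv q) x| ≤ d₁)
    (hq'0 : |deriv q 0| ≤ d₂) :
    0 < 2 * (1 + (1 + (d₁ + d₂) ^ 2) / ε +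
        Real.sqrt ((1 + (1 + (d₁ + d₂) ^ 2) / ε) ^ 2 - 4))⁻¹ ∧
    ∀ x ∈ Ioo (0 : ℝ) 1, ∀ y ∈ Ioo (0 : ℝ) 1,
      let DT : Matrix (Fin 2) (Fin 2) ℝ :=
        !![(1 : ℝ), 0; (1 - y) * deriv q x, 1 - q x]
      let A : Matrix (Fin 2) (Fin 2) ℝ := DT.det • (DT⁻¹ * (DT⁻¹)ᵀ)
      Aᵀ = A ∧
      (∀ v : Fin 2 → ℝ, v ≠ 0 → 0 < v ⬝ᵥ A.mulVec v) ∧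
      (∀ v : Fin 2 → ℝ,
        v ⬝ᵥ A.mulVec v ≥
          2 * (1 + (1 + (d₁ + d₂) ^ 2) / ε +
            Real.sqrt ((1 + (1 + (d₁ + d₂) ^ 2) / ε) ^ 2 - 4))⁻¹ * (v ⬝ᵥ v)) := by
  obtain ⟨hε0, hε1⟩ := hε
  have hqd : Differentiable ℝ q := hq2.differentiable (by norm_num)
  have hqd' : Differentiable ℝ (deriv q) :=
    (hq2.iterate_deriv' 1 1).differentiable (by norm_num)
  refine ⟨smallRoot_pos (by positivity), fun x hx y hy => ?_⟩
  intro DT A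
  set b := (1 - y) * deriv q x
  have hc : 0 < 1 - q x := by linarith [hq x hx]
  have hA : A = !![1 - q x, -b; -b, (1 + b ^ 2) / (1 - q x)] :=
    det_smul_inv_mul_transpose_inv_of_lower hc.ne'
  have hb : b ^ 2 ≤ deriv q x ^ 2 := by
    rw [mul_pow]
    exact mul_le_of_le_one_left (sq_nonneg _) (by nlinarith [hy.1, hy.2])
  have hbound : ∀ v : Fin 2 → ℝ, smallRoot (1 + (1 + (d₁ + d₂) ^ 2) / ε) * (v ⬝ᵥ v) ≤
      v ⬝ᵥ A *ᵥ v := by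
    intro v
    rw [hA]
    refine smallRoot_mul_dotProduct_self_le hc (by field_simp; ring) ?_ v
    refine add_one_add_sq_div_le hε0 hε1.le (hq x hx) ?_
    linarith [sq_add_sq_deriv_le hqd hqd' hq0 hq1 hd₁ hd₂ hq'' hq'0 (Ioo_subset_Icc_self hx)]
  refine ⟨(isSymm_mul_transpose_self _).smul _, fun v hv => ?_, hbound⟩
  have hvv : 0 < v ⬝ᵥ v := lt_of_le_of_ne (Fintype.sum_nonneg fun i => mul_self_nonneg (v i))
    (Ne.symm (dotProduct_self_eq_zero.not.2 hv))
  exact (mul_pos (smallRoot_pos (by positivity)) hvv).trans_le (hbound v)
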